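/- Let D ⊆ ℝ³ be open, let ũ, u^d, ũ^c, v : D → ℂ³ be twice continuously differentiable with ũ = u^d + ũ^c and curl ũ^c = 0 on D, let m : D → ℂ be a function, and let z, μ ∈ ℂ with μ + z ≠ 0. If curl curl ũ − z(1+m)ũ − m v = μ(1+m)u^d pointwise on D, then the function u := u^d + (z/(μ+z))·ũ^c satisfies curl curl u − (z+μ)(1+m)u − m v = 0 pointwise on D. -/

import Mathlib

/-- Classical partial derivative `∂ᵢ f` of a function `f : ℝ³ → ℂ`. -/
noncomputable def pderiv3 (i : Fin 3) (f : (Fin 3 → ℝ) → ℂ) (x : Fin 3 → ℝ) : ℂ :=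
  fderiv ℝ f x (Pi.single i 1)

/-- Curl of a vector field `w : ℝ³ → ℂ³`:
`curl w = (∂₂w₃ − ∂₃w₂, ∂₃w₁ − ∂₁w₃, ∂₁w₂ − ∂₂w₁)`. -/
noncomputable def vcurl (w : (Fin 3 → ℝ) → Fin 3 → ℂ) (x : Fin 3 → ℝ) : Fin 3 → ℂ :=
  ![pderiv3 1 (fun y => w y 2) x - pderiv3 2 (fun y => w y 1) x,
    pderiv3 2 (fun y => w y 0) x - pderiv3 0 (fun y => w y 2) x,
    pderiv3 0 (fun y => w y 1) x - pderiv3 1 (fun y => w y 0) x]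

/-- Divergence of a vector field `w : ℝ³ → ℂ³`. -/
noncomputable def vdiv (w : (Fin 3 → ℝ) → Fin 3 → ℂ) (x : Fin 3 → ℝ) : ℂ :=
  ∑ i, pderiv3 i (fun y => w y i) x

open Filter Topology

section Curl

variable {x : Fin 3 → ℝ}

theorem pderiv3_congr {f g : (Fin 3 → ℝ) → ℂ} (h : f =ᶠ[𝓝 x] g) (i : Fin 3) :
    pderiv3 i f x = pderiv3 i g x := by
  rw [pderiv3, pderiv3, h.fderiv_eq]

theorem vcurl_congr {w w' : (Fin 3 → ℝ) → Fin 3 → ℂ} (h : w =ᶠ[𝓝 x] w') :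
    vcurl w x = vcurl w' x := by
  have hcomp (i j : Fin 3) : pderiv3 i (fun y => w y j) x = pderiv3 i (fun y => w' y j) x :=
    pderiv3_congr (h.mono fun y hy => by rw [hy]) i
  simp only [vcurl, hcomp]

theorem Filter.EventuallyEq.vcurl {w w' : (Fin 3 → ℝ) → Fin 3 → ℂ} (h : w =ᶠ[𝓝 x] w') :
    _root_.vcurl w =ᶠ[𝓝 x] _root_.vcurl w' :=
  h.eventuallyEq_nhds.mono fun _ => vcurl_congr

theorem pderiv3_add_const_mul {f g : (Fin 3 → ℝ) → ℂ} (i : Fin 3) (c : ℂ)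
    (hf : DifferentiableAt ℝ f x) (hg : DifferentiableAt ℝ g x) :
    pderiv3 i (fun y => f y + c * g y) x = pderiv3 i f x + c * pderiv3 i g x := by
  rw [pderiv3, fderiv_fun_add hf (hg.const_mul c), fderiv_const_mul hg c]
  simp [pderiv3]

theorem vcurl_add_smul {w₁ w₂ : (Fin 3 → ℝ) → Fin 3 → ℂ} (c : ℂ)
    (hw₁ : DifferentiableAt ℝ w₁ x) (hw₂ : DifferentiableAt ℝ w₂ x) :
    vcurl (fun y => w₁ y + c • w₂ y) x = vcurl w₁ x + c • vcurl w₂ x := by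
  have hcomp (i j : Fin 3) : pderiv3 i (fun y => w₁ y j + c * w₂ y j) x
      = pderiv3 i (fun y => w₁ y j) x + c * pderiv3 i (fun y => w₂ y j) x :=
    pderiv3_add_const_mul i c (differentiableAt_pi.mp hw₁ j) (differentiableAt_pi.mp hw₂ j)
  ext j
  fin_cases j <;> simp [vcurl, hcomp] <;> ring

variable {D : Set (Fin 3 → ℝ)} {w₁ w₂ : (Fin 3 → ℝ) → Fin 3 → ℂ}

theorem vcurl_add_smul_eqOn_of_vcurl_eq_zero (hD : IsOpen D) (c : ℂ)
    (hw₁ : DifferentiableOn ℝ w₁ D) (hw₂ : DifferentiableOn ℝ w₂ D)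
    (hcurl : ∀ y ∈ D, vcurl w₂ y = 0) :
    Set.EqOn (vcurl fun y => w₁ y + c • w₂ y) (vcurl w₁) D := fun y hy => by
  rw [vcurl_add_smul c (hw₁.differentiableAt (hD.mem_nhds hy))
    (hw₂.differentiableAt (hD.mem_nhds hy)), hcurl y hy, smul_zero, add_zero]

theorem vcurl_vcurl_add_smul_of_vcurl_eq_zero (hD : IsOpen D) (hx : x ∈ D) (c : ℂ)
    (hw₁ : DifferentiableOn ℝ w₁ D) (hw₂ : DifferentiableOn ℝ w₂ D)
    (hcurl : ∀ y ∈ D, vcurl w₂ y = 0) :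
    vcurl (vcurl fun y => w₁ y + c • w₂ y) x = vcurl (vcurl w₁) x :=
  vcurl_congr <|
    (vcurl_add_smul_eqOn_of_vcurl_eq_zero hD c hw₁ hw₂ hcurl).eventuallyEq_of_mem
      (hD.mem_nhds hx)

end Curl

theorem stmt8_general (D : Set (Fin 3 → ℝ)) (hD : IsOpen D)
    (ut ud uc v : (Fin 3 → ℝ) → Fin 3 → ℂ) (m : (Fin 3 → ℝ) → ℂ) (z μ : ℂ)
    (hud : ContDiffOn ℝ 2 ud D)
    (huc : ContDiffOn ℝ 2 uc D)
    (hμz : μ + z ≠ 0)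
    (hdecomp : ∀ x ∈ D, ut x = ud x + uc x)
    (hcurl : ∀ x ∈ D, vcurl uc x = 0)
    (heq : ∀ x ∈ D,
      vcurl (vcurl ut) x - (z * (1 + m x)) • ut x - m x • v x = (μ * (1 + m x)) • ud x) :
    ∀ x ∈ D,
      vcurl (vcurl (fun y => ud y + (z / (μ + z)) • uc y)) x
        - ((z + μ) * (1 + m x)) • (ud x + (z / (μ + z)) • uc x) - m x • v x = 0 := by
  intro x hx
  have hud' : DifferentiableOn ℝ ud D := hud.differentiableOn (by norm_num)
  have huc' : DifferentiableOn ℝ uc D := huc.differentiableOn (by norm_num)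
  -- Adding a curl-free field does not change `curl curl`, so both sides see `curl curl u^d`.
  have hut : vcurl (vcurl ut) x = vcurl (vcurl ud) x := by
    have hut_eq : ut =ᶠ[𝓝 x] fun y => ud y + (1 : ℂ) • uc y :=
      eventually_of_mem (hD.mem_nhds hx) fun y hy => by simp only [one_smul, hdecomp y hy]
    rw [vcurl_congr hut_eq.vcurl,
      vcurl_vcurl_add_smul_of_vcurl_eq_zero hD hx 1 hud' huc' hcurl]
  have hscale : (z + μ) * (z / (μ + z)) = z := by
    rw [add_comm z μ, mul_div_cancel₀ z hμz]
  rw [vcurl_vcurl_add_smul_of_vcurl_eq_zero hD hx _ hud' huc' hcurl, ← hut]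
  linear_combination (norm := module)
    heq x hx + (z * (1 + m x)) • hdecomp x hx - hscale • ((1 + m x) • uc x)

theorem stmt8 (D : Set (Fin 3 → ℝ)) (hD : IsOpen D)
    (ut ud uc v : (Fin 3 → ℝ) → Fin 3 → ℂ) (m : (Fin 3 → ℝ) → ℂ) (z μ : ℂ)
    (hut : ContDiffOn ℝ 2 ut D) (hud : ContDiffOn ℝ 2 ud D)
    (huc : ContDiffOn ℝ 2 uc D) (hv : ContDiffOn ℝ 2 v D)
    (hμz : μ + z ≠ 0)
    (hdecomp : ∀ x ∈ D, ut x = ud x + uc x)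
    (hcurl : ∀ x ∈ D, vcurl uc x = 0)
    (heq : ∀ x ∈ D,
      vcurl (vcurl ut) x - (z * (1 + m x)) • ut x - m x • v x = (μ * (1 + m x)) • ud x) :
    ∀ x ∈ D,
      vcurl (vcurl (fun y => ud y + (z / (μ + z)) • uc y)) x
        - ((z + μ) * (1 + m x)) • (ud x + (z / (μ + z)) • uc x) - m x • v x = 0 :=
  stmt8_general D hD ut ud uc v m z μ hud huc hμz hdecomp hcurl heq
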